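/- arXiv:2408.03821 — 4 statements merged into one kernel-verified Lean document; each statement's English description precedes it below -/
import Mathlib

section
/- For every M > 2/3, the equation (2 - 3M)λ⁶ + 6λ² + 3M + 4 = 0 has exactly one solution λ* > 0. -/
/-!
Dividing by `x ^ m`, the positive roots of `a x^n + b x^m + c` are the roots of
`g x = a x^(n-m) + b + c / x^m`, which is strictly decreasing on `(0, ∞)` when `a < 0 ≤ c`;
hence there is at most one. One exists by the intermediate value theorem, since the
polynomial is `c > 0` at `0` and tends to `-∞`.
-/

open Filter Set

namespace NegLeadingTrinomial

variable {a b c : ℝ} {m n : ℕ}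

theorem strictAntiOn_mul_pow_add_add_div_pow (ha : a < 0) (hc : 0 ≤ c) {k : ℕ} (hk : k ≠ 0) :
    StrictAntiOn (fun x : ℝ => a * x ^ k + b + c / x ^ m) (Ioi 0) := by
  intro x hx y hy hxy
  have hpow : x ^ k < y ^ k := pow_lt_pow_left₀ hxy (le_of_lt hx) hk
  have hdiv : c / y ^ m ≤ c / x ^ m :=
    div_le_div_of_nonneg_left hc (pow_pos hx m) (pow_le_pow_left₀ (le_of_lt hx) hxy.le m)
  dsimp only
  nlinarith

theorem mul_pow_add_mul_pow_add_eq (hmn : m ≤ n) {x : ℝ} (hx : x ≠ 0) :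
    a * x ^ n + b * x ^ m + c = x ^ m * (a * x ^ (n - m) + b + c / x ^ m) := by
  have hxm : x ^ m ≠ 0 := pow_ne_zero m hx
  rw [mul_add, mul_add, mul_div_cancel₀ c hxm, ← pow_sub_mul_pow x hmn]
  ring

theorem eq_of_pos_roots (ha : a < 0) (hc : 0 ≤ c) (hmn : m < n) {x y : ℝ}
    (hx : 0 < x) (hy : 0 < y) (hxr : a * x ^ n + b * x ^ m + c = 0)
    (hyr : a * y ^ n + b * y ^ m + c = 0) : x = y := by
  rw [mul_pow_add_mul_pow_add_eq hmn.le hx.ne', mul_eq_zero] at hxr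
  rw [mul_pow_add_mul_pow_add_eq hmn.le hy.ne', mul_eq_zero] at hyr
  refine (strictAntiOn_mul_pow_add_add_div_pow (b := b) (m := m) ha hc
    (Nat.sub_ne_zero_of_lt hmn)).injOn hx hy ?_
  rw [(or_iff_right (pow_ne_zero m hx.ne')).1 hxr, (or_iff_right (pow_ne_zero m hy.ne')).1 hyr]

theorem exists_pos_mul_pow_add_mul_pow_add_neg (ha : a < 0) (hc : 0 ≤ c) (hmn : m < n) :
    ∃ R : ℝ, 0 < R ∧ a * R ^ n + b * R ^ m + c < 0 := by
  have hlim : Tendsto (fun x : ℝ => a * x ^ (n - m) + (b + c)) atTop atBot :=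
    tendsto_atBot_add_const_right _ _
      ((tendsto_pow_atTop (Nat.sub_ne_zero_of_lt hmn)).const_mul_atTop_of_neg ha)
  obtain ⟨R, hR1, hRneg⟩ :=
    ((eventually_ge_atTop 1).and (hlim.eventually (eventually_lt_atBot 0))).exists
  have hRpos : 0 < R := by linarith
  refine ⟨R, hRpos, ?_⟩
  have hdiv : c / R ^ m ≤ c := div_le_self hc (one_le_pow₀ hR1)
  rw [mul_pow_add_mul_pow_add_eq hmn.le hRpos.ne']
  exact mul_neg_of_pos_of_neg (pow_pos hRpos m) (by linarith)

theorem exists_pos_root (ha : a < 0) (hb : 0 ≤ b) (hc : 0 < c) (hmn : m < n) :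
    ∃ x : ℝ, 0 < x ∧ a * x ^ n + b * x ^ m + c = 0 := by
  obtain ⟨R, hRpos, hRneg⟩ := exists_pos_mul_pow_add_mul_pow_add_neg (b := b) ha hc.le hmn
  have hzero : 0 < a * 0 ^ n + b * (0 : ℝ) ^ m + c := by
    rw [zero_pow (Nat.ne_zero_of_lt hmn)]
    have : 0 ≤ b * (0 : ℝ) ^ m := mul_nonneg hb (pow_nonneg le_rfl m)
    linarith
  have hcont : ContinuousOn (fun x : ℝ => a * x ^ n + b * x ^ m + c) (Icc 0 R) := by
    fun_prop
  obtain ⟨x, hxI, hxr⟩ :=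
    intermediate_value_Icc' hRpos.le hcont ⟨hRneg.le, hzero.le⟩
  refine ⟨x, lt_of_le_of_ne hxI.1 ?_, hxr⟩
  rintro rfl
  exact hzero.ne' hxr

theorem existsUnique_pos_root (ha : a < 0) (hb : 0 ≤ b) (hc : 0 < c) (hmn : m < n) :
    ∃! x : ℝ, 0 < x ∧ a * x ^ n + b * x ^ m + c = 0 := by
  obtain ⟨x, hx, hxr⟩ := exists_pos_root ha hb hc hmn
  exact ⟨x, ⟨hx, hxr⟩, fun y ⟨hy, hyr⟩ => eq_of_pos_roots ha hc.le hmn hy hx hyr hxr⟩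

end NegLeadingTrinomial

theorem unique_positive_solution_lambda (M : ℝ) (hM : M > 2/3) :
    ∃! l : ℝ, 0 < l ∧ (2 - 3*M)*l^6 + 6*l^2 + 3*M + 4 = 0 := by
  have h := NegLeadingTrinomial.existsUnique_pos_root (a := 2 - 3*M) (b := 6) (c := 3*M + 4)
    (m := 2) (n := 6) (by linarith) (by norm_num) (by linarith) (by norm_num)
  simpa only [add_assoc] using h
end

section
/- For M > 2/3 and λ > 0, the second leading principal minor of DT̂(λ,λ,λ) equals [3(3M-2)λ⁶ + 6λ² + 4 + 3M]·[(2-3M)λ⁶ + 6λ² + 4 + 3M]/(36λ⁴); in particular it is positive for λ < λ* and negative for λ > λ*, where λ* is the unique positive root of (2-3M)λ⁶ + 6λ² + 4 + 3M. -/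
/-!
At equal stretches the Jacobian has equal diagonal entries `a` and equal off-diagonal entries
`b`, so `m₂ = (a + b)(a - b)`; up to the factor `36 λ⁴` these are the two sextics of the formula.
The first one is positive for `M > 2/3`. For the second one `Q`, subtracting `Q(λ*) = 0` gives
`Q(λ) = (λ*² - λ²)((3M - 2)(λ*⁴ + λ*²λ² + λ⁴) - 6)`, and the cofactor is positive because
`Q(λ*) = 0` forces `(3M - 2)λ*⁴ > 6`.
-/

/-- Principal Biot stresses for the Neo-Hooke–Ciarlet–Geymonat model. -/
noncomputable def Tbiot (M : ℝ) (i : Fin 3) (v : Fin 3 → ℝ) : ℝ :=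
  v i - 1/(v i) + (M/2 - 1/3) * ((v 0 * v 1 * v 2)^2 / (v i) - 1/(v i))

/-- Jacobian matrix of the principal Biot stress map. -/
noncomputable def DT (M : ℝ) (v : Fin 3 → ℝ) : Matrix (Fin 3) (Fin 3) ℝ :=
  Matrix.of fun i j => deriv (fun t => Tbiot M i (Function.update v j t)) (v j)

/-- Second leading principal minor of `DT` at equal stretches. -/
noncomputable def m2 (M l : ℝ) : ℝ :=
  (DT M (fun _ => l)) 0 0 * (DT M (fun _ => l)) 1 1 -
    (DT M (fun _ => l)) 0 1 * (DT M (fun _ => l)) 1 0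

open Finset Function

lemma Tbiot_eq_prod (M : ℝ) (i : Fin 3) (v : Fin 3 → ℝ) :
    Tbiot M i v = v i - 1 / v i + (M/2 - 1/3) * ((∏ k, v k)^2 / v i - 1 / v i) := by
  rw [Tbiot, Fin.prod_univ_three]

lemma exists_prod_update_eq_mul {ι R : Type*} [Fintype ι] [DecidableEq ι] [CommMonoid R]
    (v : ι → R) (j : ι) : ∃ P : R, ∀ t, ∏ k, update v j t k = t * P :=
  ⟨_, prod_update_of_mem (mem_univ j) v⟩

lemma DT_apply_self (M : ℝ) {v : Fin 3 → ℝ} {i : Fin 3} (hi : v i ≠ 0) :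
    DT M v i i = 1 + 1 / v i ^ 2 + (M/2 - 1/3) * (((∏ k, v k)^2 + 1) / v i ^ 2) := by
  obtain ⟨P, hP⟩ := exists_prod_update_eq_mul v i
  have hJ : ∏ k, v k = v i * P := by simpa using hP (v i)
  have hloc : (fun t => Tbiot M i (update v i t)) =ᶠ[nhds (v i)]
      fun t => t - t⁻¹ + (M/2 - 1/3) * (t * P^2 - t⁻¹) := by
    filter_upwards [eventually_ne_nhds hi] with t ht
    rw [Tbiot_eq_prod, hP, update_self]
    field_simp
  have hderiv : HasDerivAt (fun t => t - t⁻¹ + (M/2 - 1/3) * (t * P^2 - t⁻¹))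
      (1 - -(v i ^ 2)⁻¹ + (M/2 - 1/3) * (1 * P^2 - -(v i ^ 2)⁻¹)) (v i) :=
    ((hasDerivAt_id (v i)).sub (hasDerivAt_inv hi)).add
      ((((hasDerivAt_id (v i)).mul_const (P^2)).sub (hasDerivAt_inv hi)).const_mul _)
  rw [DT, Matrix.of_apply, hloc.deriv_eq, hderiv.deriv, hJ]
  field_simp
  ring

-- No hypothesis `v j ≠ 0` is needed: if `v j = 0` both sides vanish (`x / 0 = 0`).
lemma DT_apply_of_ne (M : ℝ) (v : Fin 3 → ℝ) {i j : Fin 3} (hij : i ≠ j) :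
    DT M v i j = (M/2 - 1/3) * (2 * (∏ k, v k)^2 / (v i * v j)) := by
  obtain ⟨P, hP⟩ := exists_prod_update_eq_mul v j
  have hJ : ∏ k, v k = v j * P := by simpa using hP (v j)
  have hfun : (fun t => Tbiot M i (update v j t)) =
      fun t => (v i - 1 / v i - (M/2 - 1/3) / v i) + (M/2 - 1/3) * P^2 / v i * t^2 := by
    funext t
    rw [Tbiot_eq_prod, hP, update_of_ne hij]
    ring
  have hderiv := ((hasDerivAt_pow 2 (v j)).const_mul ((M/2 - 1/3) * P^2 / v i)).const_add
    (v i - 1 / v i - (M/2 - 1/3) / v i)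
  rw [DT, Matrix.of_apply, hfun, hderiv.deriv, hJ]
  field_simp
  ring

lemma m2_eq (M : ℝ) {l : ℝ} (hl : l ≠ 0) :
    m2 M l = (3*(3*M - 2)*l^6 + 6*l^2 + 4 + 3*M) *
        ((2 - 3*M)*l^6 + 6*l^2 + 4 + 3*M) / (36*l^4) := by
  have hJ : ∏ _k : Fin 3, l = l^3 := by simp
  rw [m2, DT_apply_self M hl, DT_apply_self M hl, DT_apply_of_ne M _ (by decide),
    DT_apply_of_ne M _ (by decide), hJ]
  field_simp
  ring

lemma sextic_sub_sextic_eq (M l ls : ℝ) :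
    ((2 - 3*M)*l^6 + 6*l^2 + 4 + 3*M) - ((2 - 3*M)*ls^6 + 6*ls^2 + 4 + 3*M) =
      (ls^2 - l^2) * ((3*M - 2)*(ls^4 + ls^2*l^2 + l^4) - 6) := by
  ring

section CriticalSextic

variable {M ls : ℝ}

lemma cofactor_pos_of_sextic_eq_zero (hM : 2/3 < M) (hls : 0 < ls)
    (hroot : (2 - 3*M)*ls^6 + 6*ls^2 + 4 + 3*M = 0) (l : ℝ) :
    0 < (3*M - 2)*(ls^4 + ls^2*l^2 + l^4) - 6 := by
  have hls2 : 0 < ls^2 := by positivity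
  have h6 : 6 < (3*M - 2)*ls^4 := by nlinarith
  nlinarith [mul_nonneg (sq_nonneg (ls*l)) (by linarith : (0:ℝ) ≤ 3*M - 2),
    mul_nonneg (pow_nonneg (sq_nonneg l) 2) (by linarith : (0:ℝ) ≤ 3*M - 2)]

lemma sextic_pos_of_lt_root (hM : 2/3 < M) (hroot : (2 - 3*M)*ls^6 + 6*ls^2 + 4 + 3*M = 0)
    {l : ℝ} (hl : 0 < l) (hlt : l < ls) :
    0 < (2 - 3*M)*l^6 + 6*l^2 + 4 + 3*M := by
  have hsq : 0 < ls^2 - l^2 := by nlinarith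
  have h := sextic_sub_sextic_eq M l ls
  rw [hroot, sub_zero] at h
  rw [h]
  exact mul_pos hsq (cofactor_pos_of_sextic_eq_zero hM (hl.trans hlt) hroot l)

lemma sextic_neg_of_root_lt (hM : 2/3 < M) (hls : 0 < ls)
    (hroot : (2 - 3*M)*ls^6 + 6*ls^2 + 4 + 3*M = 0) {l : ℝ} (hlt : ls < l) :
    (2 - 3*M)*l^6 + 6*l^2 + 4 + 3*M < 0 := by
  have hsq : ls^2 - l^2 < 0 := by nlinarith
  have h := sextic_sub_sextic_eq M l ls
  rw [hroot, sub_zero] at h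
  rw [h]
  exact mul_neg_of_neg_of_pos hsq (cofactor_pos_of_sextic_eq_zero hM hls hroot l)

lemma companion_sextic_pos (hM : 2/3 < M) {l : ℝ} (hl : 0 < l) :
    0 < 3*(3*M - 2)*l^6 + 6*l^2 + 4 + 3*M := by
  have : 0 < 3*(3*M - 2)*l^6 := mul_pos (by linarith) (by positivity)
  nlinarith [sq_nonneg l]

end CriticalSextic

theorem m2_formula_and_sign (M : ℝ) (hM : M > 2/3) :
    (∀ l : ℝ, 0 < l →
      m2 M l = (3*(3*M - 2)*l^6 + 6*l^2 + 4 + 3*M) *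
        ((2 - 3*M)*l^6 + 6*l^2 + 4 + 3*M) / (36*l^4)) ∧
    ∀ ls : ℝ, 0 < ls → (2 - 3*M)*ls^6 + 6*ls^2 + 4 + 3*M = 0 →
      (∀ l : ℝ, 0 < l → l < ls → 0 < m2 M l) ∧
      (∀ l : ℝ, ls < l → m2 M l < 0) := by
  refine ⟨fun l hl => m2_eq M hl.ne', fun ls hls hroot => ⟨fun l hl hlt => ?_, fun l hlt => ?_⟩⟩
  · rw [m2_eq M hl.ne']
    exact div_pos (mul_pos (companion_sextic_pos hM hl) (sextic_pos_of_lt_root hM hroot hl hlt))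
      (by positivity)
  · have hl : 0 < l := hls.trans hlt
    rw [m2_eq M hl.ne']
    exact div_neg_of_neg_of_pos
      (mul_neg_of_pos_of_neg (companion_sextic_pos hM hl) (sextic_neg_of_root_lt hM hls hroot hlt))
      (by positivity)
end

section
/- For M > 2/3, the matrix DT̂(λ,λ,λ) is positive definite for 0 < λ < λ* and not positive semidefinite for λ > λ*, where λ* is the unique positive root of (2-3M)λ⁶ + 6λ² + 4 + 3M = 0. -/
/-!
At `λ₁ = λ₂ = λ₃ = λ` the Jacobian has one diagonal entry `a` and one off-diagonal entry
`b = (3M - 2)λ⁴/3 > 0`, i.e. it is `(a - b) • 1 + b • J` with `J` the all-ones matrix. Hence it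
is positive definite as soon as `a - b > 0`, while for `a - b < 0` the vector `e₀ - e₁` gives a
negative value of the quadratic form. Finally `6λ²(a - b) = (2 - 3M)λ⁶ + 6λ² + 4 + 3M`, and this
polynomial divided by `λ⁶` is strictly decreasing on `(0, ∞)`, so it changes sign exactly at `λ*`.
-/

open Function Matrix Set

section ConstantDiagonal

variable {n : Type*} [DecidableEq n] {a b : ℝ}

lemma of_ite_eq_smul_one_add_smul_vecMulVec :
    (of fun i j : n => if i = j then a else b)
      = (a - b) • (1 : Matrix n n ℝ) + b • vecMulVec 1 1 := by
  ext i j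
  by_cases h : i = j <;> simp [h, one_apply]

variable [Fintype n]

lemma posDef_ite_of_nonneg_of_lt (hb : 0 ≤ b) (hab : b < a) :
    (of fun i j : n => if i = j then a else b).PosDef := by
  rw [of_ite_eq_smul_one_add_smul_vecMulVec]
  exact (PosDef.one.smul (sub_pos.mpr hab)).add_posSemidef
    ((posSemidef_vecMulVec_self_star 1).smul hb)

lemma not_posSemidef_ite_of_lt {i j : n} (hij : i ≠ j) (hab : a < b) :
    ¬ (of fun i j : n => if i = j then a else b).PosSemidef := by
  intro h
  have := h.dotProduct_mulVec_nonneg (Pi.single i 1 - Pi.single j 1)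
  simp only [star_trivial, mulVec_sub, mulVec_single, MulOpposite.op_one, one_smul,
    dotProduct_sub, sub_dotProduct, single_dotProduct, col_apply, of_apply, ↓reduceIte, one_mul,
    hij.symm, hij, sub_nonneg, tsub_le_iff_right] at this
  linarith

end ConstantDiagonal

lemma prod_update_const (l t : ℝ) (j : Fin 3) :
    update (fun _ => l) j t 0 * update (fun _ => l) j t 1 * update (fun _ => l) j t 2
      = l ^ 2 * t := by
  fin_cases j <;> simp [sq, mul_comm, mul_left_comm]

lemma hasDerivAt_Tbiot_update_self (M : ℝ) {l : ℝ} (hl : l ≠ 0) (i : Fin 3) :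
    HasDerivAt (fun t => Tbiot M i (update (fun _ => l) i t))
      (1 + 1 / l ^ 2 + (M / 2 - 1 / 3) * (l ^ 4 + 1 / l ^ 2)) l := by
  simp only [Tbiot, prod_update_const, update_self]
  have hinv := (hasDerivAt_const l (1 : ℝ)).div (hasDerivAt_id' l) hl
  have hsq := (((hasDerivAt_id' l).const_mul (l ^ 2)).pow 2).div (hasDerivAt_id' l) hl
  exact ((hasDerivAt_id' l).sub hinv).add ((hsq.sub hinv).const_mul (M / 2 - 1 / 3))
    |>.congr_deriv (by simp only [Pi.pow_apply]; field_simp; ring)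

lemma hasDerivAt_Tbiot_update_of_ne (M : ℝ) {l : ℝ} (hl : l ≠ 0) {i j : Fin 3} (hij : i ≠ j) :
    HasDerivAt (fun t => Tbiot M i (update (fun _ => l) j t))
      (2 * (M / 2 - 1 / 3) * l ^ 4) l := by
  simp only [Tbiot, prod_update_const, update_of_ne hij]
  exact ((((hasDerivAt_id' l).const_mul (l ^ 2)).pow 2).div_const l).sub_const (1 / l)
    |>.const_mul (M / 2 - 1 / 3) |>.const_add (l - 1 / l) |>.congr_deriv (by field_simp; ring)

lemma DT_const (M : ℝ) {l : ℝ} (hl : l ≠ 0) :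
    DT M (fun _ => l) = of fun i j =>
      if i = j then 1 + 1 / l ^ 2 + (M / 2 - 1 / 3) * (l ^ 4 + 1 / l ^ 2)
      else 2 * (M / 2 - 1 / 3) * l ^ 4 := by
  ext i j
  rw [DT, of_apply, of_apply]
  split_ifs with hij
  · subst hij
    exact (hasDerivAt_Tbiot_update_self M hl i).deriv
  · exact (hasDerivAt_Tbiot_update_of_ne M hl hij).deriv

def criticalPoly (M x : ℝ) : ℝ := (2 - 3 * M) * x ^ 6 + 6 * x ^ 2 + 4 + 3 * M

lemma DT_const_diag_sub_offDiag (M : ℝ) {l : ℝ} (hl : l ≠ 0) :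
    1 + 1 / l ^ 2 + (M / 2 - 1 / 3) * (l ^ 4 + 1 / l ^ 2) - 2 * (M / 2 - 1 / 3) * l ^ 4
      = criticalPoly M l / (6 * l ^ 2) := by
  rw [criticalPoly]
  field_simp
  ring

lemma criticalPoly_div_pow_six (M : ℝ) {x : ℝ} (hx : x ≠ 0) :
    criticalPoly M x / x ^ 6 = 2 - 3 * M + 6 / x ^ 4 + (4 + 3 * M) / x ^ 6 := by
  rw [criticalPoly]
  field_simp
  ring

lemma strictAntiOn_criticalPoly_div_pow_six {M : ℝ} (hM : 0 ≤ 4 + 3 * M) :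
    StrictAntiOn (fun x => criticalPoly M x / x ^ 6) (Ioi 0) := by
  intro x (hx : 0 < x) y (hy : 0 < y) hxy
  simp only [criticalPoly_div_pow_six M hx.ne', criticalPoly_div_pow_six M hy.ne']
  have h4 : 6 / y ^ 4 < 6 / x ^ 4 := by gcongr
  have h6 : (4 + 3 * M) / y ^ 6 ≤ (4 + 3 * M) / x ^ 6 := by gcongr
  linarith

section Root

variable {M r x : ℝ} (hM : 0 ≤ 4 + 3 * M) (hr : 0 < r) (hroot : criticalPoly M r = 0)
include hM hr hroot

lemma criticalPoly_pos_of_lt (hx : 0 < x) (hxr : x < r) : 0 < criticalPoly M x := by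
  have : criticalPoly M r / r ^ 6 < criticalPoly M x / x ^ 6 :=
    strictAntiOn_criticalPoly_div_pow_six hM hx hr hxr
  rw [hroot, zero_div] at this
  exact (div_pos_iff_of_pos_right (by positivity)).mp this

lemma criticalPoly_neg_of_gt (hrx : r < x) : criticalPoly M x < 0 := by
  have hx := hr.trans hrx
  have : criticalPoly M x / x ^ 6 < criticalPoly M r / r ^ 6 :=
    strictAntiOn_criticalPoly_div_pow_six hM hr hx hrx
  rw [hroot, zero_div] at this
  exact neg_of_div_neg_left this (by positivity)

end Root

theorem DT_posdef_iff (M : ℝ) (hM : M > 2/3) (ls : ℝ) (hls : 0 < ls)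
    (hroot : (2 - 3*M)*ls^6 + 6*ls^2 + 4 + 3*M = 0) :
    (∀ l : ℝ, 0 < l → l < ls → (DT M (fun _ => l)).PosDef) ∧
    (∀ l : ℝ, ls < l → ¬ (DT M (fun _ => l)).PosSemidef) := by
  have hM' : 0 ≤ 4 + 3 * M := by linarith
  refine ⟨fun l hl hlt => ?_, fun l hlt => ?_⟩
  · have hoff : 0 ≤ 2 * (M / 2 - 1 / 3) * l ^ 4 := by
      have : 0 < M / 2 - 1 / 3 := by linarith
      positivity
    rw [DT_const M hl.ne']
    refine posDef_ite_of_nonneg_of_lt hoff (sub_pos.mp ?_)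
    rw [DT_const_diag_sub_offDiag M hl.ne']
    exact div_pos (criticalPoly_pos_of_lt hM' hls hroot hl hlt) (by positivity)
  · have hl := hls.trans hlt
    rw [DT_const M hl.ne']
    refine not_posSemidef_ite_of_lt (i := 0) (j := 1) (by decide) (sub_neg.mp ?_)
    rw [DT_const_diag_sub_offDiag M hl.ne']
    exact div_neg_of_neg_of_pos (criticalPoly_neg_of_gt hM' hls hroot hlt) (by positivity)
end

section
/- For M > 2/3, if β, γ > 0 with β ≠ γ satisfy T₁(β,β,γ) = T₃(β,β,γ), then γ = (√((9M² + 6M - 8)β⁴ + 9β²) + 3β)/((3M-2)β⁴). -/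
/-- `T₁(β, β, γ)` of the paper. -/
noncomputable def T₁ (M β γ : ℝ) : ℝ := (((3*M - 2)/6)*(β^4*γ^2 - 1) + β^2 - 1)/β

/-- `T₃(β, β, γ)` of the paper. -/
noncomputable def T₃ (M β γ : ℝ) : ℝ := (1/6)*(3*M - 2)*β^4*γ - (3*M + 4)/(6*γ) + γ

theorem T₁_sub_T₃ (M : ℝ) {β γ : ℝ} (hβ : β ≠ 0) (hγ : γ ≠ 0) :
    T₁ M β γ - T₃ M β γ =
      -(β - γ) * ((3*M - 2)*β^4*γ^2 - 6*β*γ - (3*M + 4)) / (6*β*γ) := by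
  unfold T₁ T₃
  field_simp
  ring

theorem eq_of_quadratic_eq_zero_of_pos {a b c x : ℝ} (ha : 0 < a) (hc : 0 ≤ c) (hx : 0 < x)
    (h : a*x^2 - 2*b*x - c = 0) : x = (√(b^2 + a*c) + b)/a := by
  have hsq : (a*x - b)^2 = b^2 + a*c := by linear_combination a * h
  -- `x (a x - 2 b) = c ≥ 0` forces `a x ≥ 2 b`, and `a x > 0`, so `a x - b ≥ 0`.
  have hnonneg : 0 ≤ a*x - b := by nlinarith [mul_pos ha hx]
  rw [← hsq, Real.sqrt_sq hnonneg]
  field_simp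
  ring

theorem gamma_formula (M β γ : ℝ) (hM : M > 2/3)
    (hβ : 0 < β) (hγ : 0 < γ) (hne : β ≠ γ)
    (heq : (((3*M - 2)/6)*(β^4*γ^2 - 1) + β^2 - 1)/β =
      (1/6)*(3*M - 2)*β^4*γ - (3*M + 4)/(6*γ) + γ) :
    γ = (Real.sqrt ((9*M^2 + 6*M - 8)*β^4 + 9*β^2) + 3*β)/((3*M - 2)*β^4) := by
  have hquad : (3*M - 2)*β^4*γ^2 - 6*β*γ - (3*M + 4) = 0 := by
    have hdiff := T₁_sub_T₃ M hβ.ne' hγ.ne'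
    rw [show T₁ M β γ = T₃ M β γ from heq, sub_self, eq_comm, div_eq_zero_iff] at hdiff
    simpa [sub_eq_zero, hne.symm, hβ.ne', hγ.ne'] using hdiff
  have ha : 0 < (3*M - 2)*β^4 := mul_pos (by linarith) (by positivity)
  have hroot := eq_of_quadratic_eq_zero_of_pos (a := (3*M - 2)*β^4) (b := 3*β) (c := 3*M + 4)
    ha (by linarith) hγ (by linear_combination hquad)
  rw [hroot]
  congr 3
  ring
end
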